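/- arXiv:2402.04398 — 4 statements merged into one kernel-verified Lean document; each statement's English description precedes it below -/
import Mathlib

section
/- Let C be a finite nonempty type and let Q : Matrix C C ℝ be a row-stochastic invertible matrix with Q i i > 0 for every i. Let p be a probability vector on C with p c > 0 for all c, and let p̃ be the forward-corrected vector p̃ j = ∑ i, Q i j * p i. Then p̃ j > 0 for all j, p̃ is a probability vector, and for every probability vector h on C whose forward-corrected prediction (Qᵀ h) j = ∑ i, Q i j * h i is strictly positive in every coordinate, one has ∑ j, p̃ j * (-Real.log (∑ i, Q i j * h i)) ≥ ∑ j, p̃ j * (-Real.log (p̃ j)), with equality if and only if h = p. Hence p is the unique minimizer of the forward loss h ↦ ∑ j, p̃ j * (-Real.log ((Qᵀ h) j)) over such probability vectors h. -/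
private lemma gibbs_aux (a b : ℝ) (ha : 0 < a) (hb : 0 < b) :
    a * (Real.log b - Real.log a) ≤ b - a ∧
    (a * (Real.log b - Real.log a) = b - a ↔ b = a) := by
  have hlog : Real.log b - Real.log a = Real.log (b / a) := (Real.log_div hb.ne' ha.ne').symm
  have hba : 0 < b / a := div_pos hb ha
  have hle : Real.log (b / a) ≤ b / a - 1 := Real.log_le_sub_one_of_pos hba
  have key : a * (b / a - 1) = b - a := by field_simp
  constructor
  · rw [hlog]
    calc a * Real.log (b / a) ≤ a * (b / a - 1) := by
          exact mul_le_mul_of_nonneg_left hle ha.le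
      _ = b - a := key
  · constructor
    · intro heq
      by_contra hne
      have hne1 : b / a ≠ 1 := by
        intro h1; apply hne; field_simp at h1; linarith
      have hlt : Real.log (b / a) < b / a - 1 := Real.log_lt_sub_one_of_pos hba hne1
      have : a * Real.log (b / a) < a * (b / a - 1) := by
        exact mul_lt_mul_of_pos_left hlt ha
      rw [hlog] at heq; rw [key] at this; linarith
    · intro h; subst h; simp

/-- **Forward loss minimization at a single time step.**
Let `Q` be a row-stochastic invertible matrix with positive diagonal and `p` a probability
vector with full support. Then the noisy posterior `p̃ = Qᵀ p` has full support and is a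
probability vector, and for every probability vector `h` whose forward-corrected prediction
`Qᵀ h` is strictly positive, the forward loss of `h` against `p̃` is at least the entropy of
`p̃`, with equality iff `h = p`. -/
theorem forwardLoss_minimized_at_clean_posterior {C : Type*} [Fintype C] [Nonempty C]
    [DecidableEq C]
    (Q : Matrix C C ℝ)
    (hQ0 : ∀ i j, 0 ≤ Q i j) (hQ1 : ∀ i, ∑ j, Q i j = 1)
    (hQinv : IsUnit Q.det) (hQd : ∀ i, 0 < Q i i)
    (p : C → ℝ) (hp0 : ∀ c, 0 < p c) (hp1 : ∑ c, p c = 1) :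
    (∀ j, 0 < ∑ i, Q i j * p i) ∧
    ((∀ j, 0 ≤ ∑ i, Q i j * p i) ∧ (∑ j, ∑ i, Q i j * p i) = 1) ∧
    (∀ h : C → ℝ, (∀ c, 0 ≤ h c) → (∑ c, h c = 1) →
      (∀ j, 0 < ∑ i, Q i j * h i) →
      ((∑ j, (∑ i, Q i j * p i) * (-Real.log (∑ i, Q i j * h i)) ≥
          ∑ j, (∑ i, Q i j * p i) * (-Real.log (∑ i, Q i j * p i))) ∧
       ((∑ j, (∑ i, Q i j * p i) * (-Real.log (∑ i, Q i j * h i)) =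
          ∑ j, (∑ i, Q i j * p i) * (-Real.log (∑ i, Q i j * p i))) ↔ h = p))) := by
  set pt : C → ℝ := fun j => ∑ i, Q i j * p i with hpt
  have hpt0 : ∀ j, 0 < pt j := by
    intro j
    apply Finset.sum_pos' (fun i _ => mul_nonneg (hQ0 i j) (hp0 i).le)
    exact ⟨j, Finset.mem_univ j, mul_pos (hQd j) (hp0 j)⟩
  have sum_forward : ∀ v : C → ℝ, (∑ c, v c = 1) → (∑ j, ∑ i, Q i j * v i) = 1 := by
    intro v hv
    rw [Finset.sum_comm]
    calc (∑ i, ∑ j, Q i j * v i) = ∑ i, (∑ j, Q i j) * v i := by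
          simp [Finset.sum_mul]
      _ = ∑ i, v i := by simp [hQ1]
      _ = 1 := hv
  refine ⟨hpt0, ⟨fun j => (hpt0 j).le, sum_forward p hp1⟩, ?_⟩
  intro h hh0 hh1 hht0
  set ht : C → ℝ := fun j => ∑ i, Q i j * h i with hht
  -- difference of losses equals sum of nonneg terms
  have hdiff : (∑ j, pt j * (-Real.log (ht j))) - (∑ j, pt j * (-Real.log (pt j)))
      = ∑ j, ((ht j - pt j) - pt j * (Real.log (ht j) - Real.log (pt j))) := by
    have h1 : ∑ j, (ht j - pt j) = 0 := by
      rw [Finset.sum_sub_distrib, sum_forward h hh1, sum_forward p hp1]; ring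
    have e : ∀ j, (ht j - pt j) - pt j * (Real.log (ht j) - Real.log (pt j)) =
        (ht j - pt j) + (pt j * (-Real.log (ht j)) - pt j * (-Real.log (pt j))) := by
      intro j; ring
    rw [Finset.sum_congr rfl (fun j _ => e j), Finset.sum_add_distrib, h1,
      Finset.sum_sub_distrib]
    ring
  have hterm : ∀ j, 0 ≤ (ht j - pt j) - pt j * (Real.log (ht j) - Real.log (pt j)) := by
    intro j
    have := (gibbs_aux (pt j) (ht j) (hpt0 j) (hht0 j)).1
    linarith
  have hsum0 : 0 ≤ ∑ j, ((ht j - pt j) - pt j * (Real.log (ht j) - Real.log (pt j))) :=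
    Finset.sum_nonneg (fun j _ => hterm j)
  constructor
  · linarith [hdiff, hsum0]
  · constructor
    · intro heq
      have hz : ∑ j, ((ht j - pt j) - pt j * (Real.log (ht j) - Real.log (pt j))) = 0 := by
        rw [← hdiff, heq]; ring
      have hall : ∀ j ∈ Finset.univ, (ht j - pt j) - pt j * (Real.log (ht j) - Real.log (pt j)) = 0 :=
        (Finset.sum_eq_zero_iff_of_nonneg (fun j _ => hterm j)).1 hz
      have heqpt : ∀ j, ht j = pt j := by
        intro j
        have := hall j (Finset.mem_univ j)
        have : pt j * (Real.log (ht j) - Real.log (pt j)) = ht j - pt j := by linarith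
        exact (gibbs_aux (pt j) (ht j) (hpt0 j) (hht0 j)).2.1 this
      -- injectivity via invertibility
      have hv : Matrix.vecMul (fun i => h i - p i) Q = 0 := by
        funext j
        have := heqpt j
        simp only [hht, hpt] at this
        simp only [Matrix.vecMul, dotProduct, Pi.zero_apply]
        have e : ∀ i, (h i - p i) * Q i j = Q i j * h i - Q i j * p i := by intro i; ring
        rw [Finset.sum_congr rfl (fun i _ => e i), Finset.sum_sub_distrib, this]
        ring
      have hzero : (fun i => h i - p i) = 0 := by
        have h1 : Matrix.vecMul (fun i => h i - p i) (Q * Q⁻¹) = 0 := by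
          rw [← Matrix.vecMul_vecMul, hv, Matrix.zero_vecMul]
        rw [Matrix.mul_nonsing_inv Q hQinv, Matrix.vecMul_one] at h1
        exact h1
      funext c
      have := congrFun hzero c
      simp at this
      linarith
    · intro hhp; subst hhp; rfl
end

section
/- Let C be a finite nonempty type and let Q : Matrix C C ℝ be a row-stochastic invertible matrix with Q i i > 0 for every i. Let p be a probability vector on C with p c > 0 for all c, and let p̃ j = ∑ i, Q i j * p i. Then over the set of probability vectors h on C with (Qᵀ h) j > 0 for all j and h c > 0 for all c, the set of minimizers of the noisy forward loss h ↦ ∑ j, p̃ j * (-Real.log ((Qᵀ h) j)) coincides with the set of minimizers of the clean negative log-likelihood h ↦ ∑ c, p c * (-Real.log (h c)), and both sets equal {p}. That is, a classifier minimizing the forward loss over the noisy label distribution maximizes the likelihood over the clean label distribution. -/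
/-- A probability vector on a finite type. -/
def IsProbVec {C : Type*} [Fintype C] (p : C → ℝ) : Prop :=
  (∀ c, 0 ≤ p c) ∧ ∑ c, p c = 1

/-- Probability vectors `h` with full support and strictly positive forward-corrected
prediction `Qᵀ h`. -/
def Admissible {C : Type*} [Fintype C] (Q : Matrix C C ℝ) : Set (C → ℝ) :=
  {h | IsProbVec h ∧ (∀ c, 0 < h c) ∧ ∀ j, 0 < ∑ i, Q i j * h i}

/-- The forward loss of a prediction `h` against a noisy label distribution `p̃`:
the cross-entropy of `Qᵀ h` against `p̃`. -/
noncomputable def ForwardLoss {C : Type*} [Fintype C] (Q : Matrix C C ℝ) (ptilde h : C → ℝ) : ℝ :=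
  ∑ j, ptilde j * (-Real.log (∑ i, Q i j * h i))

/-- The clean negative log-likelihood (cross-entropy) of `h` against `p`. -/
noncomputable def CleanNLL {C : Type*} [Fintype C] (p h : C → ℝ) : ℝ :=
  ∑ c, p c * (-Real.log (h c))

/-- Gibbs' inequality, non-strict form. -/
lemma gibbs_le {C : Type*} [Fintype C] (q r : C → ℝ) (hq0 : ∀ c, 0 < q c)
    (hr0 : ∀ c, 0 < r c) (hq1 : ∑ c, q c = 1) (hr1 : ∑ c, r c = 1) :
    ∑ c, q c * (-Real.log (q c)) ≤ ∑ c, q c * (-Real.log (r c)) := by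
  have key : ∑ c, q c * (Real.log (r c) - Real.log (q c)) ≤ 0 := by
    have h1 : ∀ c ∈ Finset.univ, q c * (Real.log (r c) - Real.log (q c)) ≤ r c - q c := by
      intro c _
      rw [← Real.log_div (hr0 c).ne' (hq0 c).ne']
      have hpos : 0 < r c / q c := div_pos (hr0 c) (hq0 c)
      have := Real.log_le_sub_one_of_pos hpos
      have h2 : q c * Real.log (r c / q c) ≤ q c * (r c / q c - 1) :=
        mul_le_mul_of_nonneg_left this (hq0 c).le
      have h3 : q c * (r c / q c - 1) = r c - q c := by
        rw [mul_sub, mul_one, mul_div_cancel₀ _ (hq0 c).ne']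
      linarith
    calc ∑ c, q c * (Real.log (r c) - Real.log (q c)) ≤ ∑ c, (r c - q c) :=
          Finset.sum_le_sum h1
      _ = 0 := by rw [Finset.sum_sub_distrib, hq1, hr1]; ring
  have : ∑ c, q c * (-Real.log (r c)) - ∑ c, q c * (-Real.log (q c))
      = -∑ c, q c * (Real.log (r c) - Real.log (q c)) := by
    rw [← Finset.sum_sub_distrib, ← Finset.sum_neg_distrib]
    congr 1; ext c; ring
  linarith

/-- Gibbs' inequality, strict form. -/
lemma gibbs_lt {C : Type*} [Fintype C] (q r : C → ℝ) (hq0 : ∀ c, 0 < q c)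
    (hr0 : ∀ c, 0 < r c) (hq1 : ∑ c, q c = 1) (hr1 : ∑ c, r c = 1) (hne : q ≠ r) :
    ∑ c, q c * (-Real.log (q c)) < ∑ c, q c * (-Real.log (r c)) := by
  have key : ∑ c, q c * (Real.log (r c) - Real.log (q c)) < 0 := by
    obtain ⟨c0, hc0⟩ := Function.ne_iff.mp hne
    have h1 : ∀ c ∈ Finset.univ, q c * (Real.log (r c) - Real.log (q c)) ≤ r c - q c := by
      intro c _
      rw [← Real.log_div (hr0 c).ne' (hq0 c).ne']
      have hpos : 0 < r c / q c := div_pos (hr0 c) (hq0 c)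
      have := Real.log_le_sub_one_of_pos hpos
      have h2 : q c * Real.log (r c / q c) ≤ q c * (r c / q c - 1) :=
        mul_le_mul_of_nonneg_left this (hq0 c).le
      have h3 : q c * (r c / q c - 1) = r c - q c := by rw [mul_sub, mul_one, mul_div_cancel₀ _ (hq0 c).ne']
      linarith
    have hstrict : q c0 * (Real.log (r c0) - Real.log (q c0)) < r c0 - q c0 := by
      rw [← Real.log_div (hr0 c0).ne' (hq0 c0).ne']
      have hpos : 0 < r c0 / q c0 := div_pos (hr0 c0) (hq0 c0)
      have hne1 : r c0 / q c0 ≠ 1 := by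
        intro h
        exact hc0 ((div_eq_one_iff_eq (hq0 c0).ne').mp h).symm
      have := Real.log_lt_sub_one_of_pos hpos hne1
      have h2 : q c0 * Real.log (r c0 / q c0) < q c0 * (r c0 / q c0 - 1) :=
        mul_lt_mul_of_pos_left this (hq0 c0)
      have h3 : q c0 * (r c0 / q c0 - 1) = r c0 - q c0 := by rw [mul_sub, mul_one, mul_div_cancel₀ _ (hq0 c0).ne']
      linarith
    calc ∑ c, q c * (Real.log (r c) - Real.log (q c)) < ∑ c, (r c - q c) :=
          Finset.sum_lt_sum h1 ⟨c0, Finset.mem_univ c0, hstrict⟩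
      _ = 0 := by rw [Finset.sum_sub_distrib, hq1, hr1]; ring
  have : ∑ c, q c * (-Real.log (r c)) - ∑ c, q c * (-Real.log (q c))
      = -∑ c, q c * (Real.log (r c) - Real.log (q c)) := by
    rw [← Finset.sum_sub_distrib, ← Finset.sum_neg_distrib]
    congr 1; ext c; ring
  linarith

/-- **Forward loss on noisy labels recovers the clean-label MLE.**
Over admissible probability vectors, the minimizers of the noisy forward loss coincide with
the minimizers of the clean negative log-likelihood, and both sets equal `{p}`. -/
theorem forwardLoss_minimizers_eq_cleanNLL_minimizers {C : Type*} [Fintype C] [Nonempty C]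
    [DecidableEq C]
    (Q : Matrix C C ℝ)
    (hQ0 : ∀ i j, 0 ≤ Q i j) (hQ1 : ∀ i, ∑ j, Q i j = 1)
    (hQinv : IsUnit Q.det) (hQd : ∀ i, 0 < Q i i)
    (p : C → ℝ) (hp0 : ∀ c, 0 < p c) (hp1 : ∑ c, p c = 1) :
    {h ∈ Admissible Q |
        ∀ g ∈ Admissible Q,
          ForwardLoss Q (fun j => ∑ i, Q i j * p i) h ≤
            ForwardLoss Q (fun j => ∑ i, Q i j * p i) g} =
      {h ∈ Admissible Q | ∀ g ∈ Admissible Q, CleanNLL p h ≤ CleanNLL p g} ∧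
    {h ∈ Admissible Q |
        ∀ g ∈ Admissible Q,
          ForwardLoss Q (fun j => ∑ i, Q i j * p i) h ≤
            ForwardLoss Q (fun j => ∑ i, Q i j * p i) g} = {p} := by
  -- basic facts
  have hsumT : ∀ h : C → ℝ, (∑ c, h c = 1) → ∑ j, ∑ i, Q i j * h i = 1 := by
    intro h h1
    rw [Finset.sum_comm]
    calc ∑ i, ∑ j, Q i j * h i = ∑ i, (∑ j, Q i j) * h i := by
          simp [Finset.sum_mul]
      _ = 1 := by simp [hQ1, h1]
  have hptpos : ∀ j, 0 < ∑ i, Q i j * p i := by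
    intro j
    have : (0:ℝ) < Q j j * p j := mul_pos (hQd j) (hp0 j)
    refine lt_of_lt_of_le this ?_
    exact Finset.single_le_sum (fun i _ => mul_nonneg (hQ0 i j) (hp0 i).le)
      (Finset.mem_univ j)
  have hpadm : p ∈ Admissible Q := ⟨⟨fun c => (hp0 c).le, hp1⟩, hp0, hptpos⟩
  have hptsum : ∑ j, ∑ i, Q i j * p i = 1 := hsumT p hp1
  -- injectivity of h ↦ Q.transpose h
  have hinj : Function.Injective (Matrix.mulVec Q.transpose) :=
    Matrix.mulVec_injective_iff_isUnit.mpr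
      ((Matrix.isUnit_iff_isUnit_det _).mpr (by rwa [Matrix.det_transpose]))
  have hmulVec : ∀ (h : C → ℝ) j, Matrix.mulVec Q.transpose h j = ∑ i, Q i j * h i := by
    intro h j
    simp [Matrix.mulVec, dotProduct, Matrix.transpose_apply]
  -- forward minimizer set = {p}
  have hfwd : {h ∈ Admissible Q |
      ∀ g ∈ Admissible Q,
        ForwardLoss Q (fun j => ∑ i, Q i j * p i) h ≤
          ForwardLoss Q (fun j => ∑ i, Q i j * p i) g} = {p} := by
    ext h
    simp only [Set.mem_setOf_eq, Set.mem_singleton_iff]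
    constructor
    · rintro ⟨hadm, hmin⟩
      obtain ⟨⟨hh0, hh1⟩, hhpos, hhT⟩ := hadm
      by_contra hne
      have hTne : (fun j => ∑ i, Q i j * h i) ≠ (fun j => ∑ i, Q i j * p i) := by
        intro heq
        apply hne
        apply hinj
        funext j
        rw [hmulVec, hmulVec]
        exact congrFun heq j
      have := gibbs_lt (fun j => ∑ i, Q i j * p i) (fun j => ∑ i, Q i j * h i)
        hptpos hhT hptsum (hsumT h hh1) (fun heq => hTne heq.symm)
      have hle := hmin p hpadm
      simp only [ForwardLoss] at hle
      linarith
    · intro he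
      rw [he]
      refine ⟨hpadm, fun g hg => ?_⟩
      obtain ⟨⟨hg0, hg1⟩, hgpos, hgT⟩ := hg
      exact gibbs_le (fun j => ∑ i, Q i j * p i) (fun j => ∑ i, Q i j * g i)
        hptpos hgT hptsum (hsumT g hg1)
  -- clean minimizer set = {p}
  have hclean : {h ∈ Admissible Q | ∀ g ∈ Admissible Q, CleanNLL p h ≤ CleanNLL p g}
      = {p} := by
    ext h
    simp only [Set.mem_setOf_eq, Set.mem_singleton_iff]
    constructor
    · rintro ⟨hadm, hmin⟩
      obtain ⟨⟨hh0, hh1⟩, hhpos, hhT⟩ := hadm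
      by_contra hne
      have := gibbs_lt p h hp0 hhpos hp1 hh1 (fun heq => hne heq.symm)
      have hle := hmin p hpadm
      simp only [CleanNLL] at hle
      linarith
    · intro he
      rw [he]
      refine ⟨hpadm, fun g hg => ?_⟩
      obtain ⟨⟨hg0, hg1⟩, hgpos, hgT⟩ := hg
      exact gibbs_le p g hp0 hgpos hp1 hg1
  exact ⟨hfwd.trans hclean.symm, hfwd⟩
end

section
/- Let X and C be finite nonempty types, let μ be a probability vector on X, let Q : Matrix C C ℝ be a row-stochastic invertible matrix with Q i i > 0 for every i, and let p : X → (C → ℝ) assign to each x a probability vector on C with p x c > 0 for all c. Set p̃ x j = ∑ i, Q i j * p x i. Consider models h : X → (C → ℝ) assigning to each x a probability vector with h x c > 0 and (Qᵀ (h x)) j > 0 for all c, j. Then a model h minimizes the noisy forward risk R̃(h) = ∑ x, μ x * ∑ j, p̃ x j * (-Real.log (∑ i, Q i j * h x i)) over all such models if and only if it minimizes the clean risk R(h) = ∑ x, μ x * ∑ c, p x c * (-Real.log (h x c)); moreover, h minimizes both if and only if h x = p x for every x with μ x > 0. In particular h = p is a minimizer of both risks. -/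
section Gibbs
variable {C : Type*} [Fintype C]

lemma term_ineq (a b : ℝ) (ha : 0 < a) (hb : 0 < b) :
    a - b ≤ a * (-Real.log b) - a * (-Real.log a) := by
  have h := Real.log_le_sub_one_of_pos (div_pos hb ha)
  rw [Real.log_div hb.ne' ha.ne'] at h
  have hba : a * (b / a) = b := by field_simp
  nlinarith [mul_le_mul_of_nonneg_left h ha.le]

lemma term_eq (a b : ℝ) (ha : 0 < a) (hb : 0 < b)
    (h : a * (-Real.log b) - a * (-Real.log a) ≤ a - b) : b = a := by
  by_contra hne
  have hx : b / a ≠ 1 := by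
    intro h1; exact hne (by field_simp at h1; linarith)
  have h2 := Real.log_lt_sub_one_of_pos (div_pos hb ha) hx
  rw [Real.log_div hb.ne' ha.ne'] at h2
  have hba : a * (b / a) = b := by field_simp
  nlinarith [mul_lt_mul_of_pos_left h2 ha]

lemma gibbs_le_s4 (q r : C → ℝ) (hq : ∀ c, 0 < q c) (hr : ∀ c, 0 < r c)
    (hqs : ∑ c, q c = 1) (hrs : ∑ c, r c = 1) :
    ∑ c, q c * (-Real.log (q c)) ≤ ∑ c, q c * (-Real.log (r c)) := by
  have h : ∀ c ∈ Finset.univ, q c - r c ≤ q c * (-Real.log (r c)) - q c * (-Real.log (q c)) :=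
    fun c _ => term_ineq _ _ (hq c) (hr c)
  have := Finset.sum_le_sum h
  simp only [Finset.sum_sub_distrib, hqs, hrs] at this
  linarith

lemma gibbs_eq (q r : C → ℝ) (hq : ∀ c, 0 < q c) (hr : ∀ c, 0 < r c)
    (hqs : ∑ c, q c = 1) (hrs : ∑ c, r c = 1)
    (h : ∑ c, q c * (-Real.log (r c)) ≤ ∑ c, q c * (-Real.log (q c))) : r = q := by
  set f : C → ℝ := fun c => q c * (-Real.log (r c)) - q c * (-Real.log (q c)) - (q c - r c)
  have hf0 : ∀ c ∈ Finset.univ, 0 ≤ f c := fun c _ => by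
    have := term_ineq (q c) (r c) (hq c) (hr c); simp only [f]; linarith
  have hsum : ∑ c, f c ≤ 0 := by
    simp only [f, Finset.sum_sub_distrib, hqs, hrs]; linarith
  have heach := (Finset.sum_eq_zero_iff_of_nonneg hf0).mp
    (le_antisymm hsum (Finset.sum_nonneg hf0))
  funext c
  have := heach c (Finset.mem_univ c)
  exact term_eq (q c) (r c) (hq c) (hr c) (by simp only [f] at this; linarith)

end Gibbs

section Risk
variable {X C : Type*} [Fintype X] [Fintype C]

lemma erisk_le (μ : X → ℝ) (hμ0 : ∀ x, 0 ≤ μ x) (q r : X → C → ℝ)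
    (hq : ∀ x c, 0 < q x c) (hr : ∀ x c, 0 < r x c)
    (hqs : ∀ x, ∑ c, q x c = 1) (hrs : ∀ x, ∑ c, r x c = 1) :
    ∑ x, μ x * ∑ c, q x c * (-Real.log (q x c)) ≤
      ∑ x, μ x * ∑ c, q x c * (-Real.log (r x c)) :=
  Finset.sum_le_sum fun x _ => mul_le_mul_of_nonneg_left
    (gibbs_le_s4 (q x) (r x) (hq x) (hr x) (hqs x) (hrs x)) (hμ0 x)

lemma erisk_eq (μ : X → ℝ) (hμ0 : ∀ x, 0 ≤ μ x) (q r : X → C → ℝ)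
    (hq : ∀ x c, 0 < q x c) (hr : ∀ x c, 0 < r x c)
    (hqs : ∀ x, ∑ c, q x c = 1) (hrs : ∀ x, ∑ c, r x c = 1)
    (h : ∑ x, μ x * ∑ c, q x c * (-Real.log (r x c)) ≤
         ∑ x, μ x * ∑ c, q x c * (-Real.log (q x c))) :
    ∀ x, 0 < μ x → r x = q x := by
  set f : X → ℝ := fun x =>
    μ x * (∑ c, q x c * (-Real.log (r x c)) - ∑ c, q x c * (-Real.log (q x c)))
  have hf0 : ∀ x ∈ Finset.univ, 0 ≤ f x := fun x _ =>
    mul_nonneg (hμ0 x) (sub_nonneg.mpr (gibbs_le_s4 _ _ (hq x) (hr x) (hqs x) (hrs x)))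
  have hsum : ∑ x, f x ≤ 0 := by
    simp only [f, mul_sub, Finset.sum_sub_distrib]; linarith
  have heach := (Finset.sum_eq_zero_iff_of_nonneg hf0).mp
    (le_antisymm hsum (Finset.sum_nonneg hf0))
  intro x hx
  have hfx := heach x (Finset.mem_univ x)
  simp only [f] at hfx
  rcases mul_eq_zero.mp hfx with h1 | h1
  · exact absurd h1 hx.ne'
  · exact gibbs_eq _ _ (hq x) (hr x) (hqs x) (hrs x) (by linarith)

end Risk

/-- Models assigning to each feature value a fully supported probability vector on classes
whose forward-corrected prediction `Qᵀ (h x)` is strictly positive. -/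
def AdmissibleModel {X C : Type*} [Fintype C] (Q : Matrix C C ℝ) : Set (X → C → ℝ) :=
  {h | ∀ x, (∀ c, 0 ≤ h x c) ∧ (∑ c, h x c = 1) ∧ (∀ c, 0 < h x c) ∧
    ∀ j, 0 < ∑ i, Q i j * h x i}

/-- The noisy forward risk: the `μ`-expectation over features of the forward loss of the
model against the noisy posterior `p̃ x = Qᵀ (p x)`. -/
noncomputable def NoisyForwardRisk {X C : Type*} [Fintype X] [Fintype C]
    (μ : X → ℝ) (Q : Matrix C C ℝ) (p : X → C → ℝ) (h : X → C → ℝ) : ℝ :=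
  ∑ x, μ x * ∑ j, (∑ i, Q i j * p x i) * (-Real.log (∑ i, Q i j * h x i))

/-- The clean risk: the `μ`-expectation over features of the cross-entropy of the model
against the clean posterior `p x`. -/
noncomputable def CleanRisk {X C : Type*} [Fintype X] [Fintype C]
    (μ : X → ℝ) (p : X → C → ℝ) (h : X → C → ℝ) : ℝ :=
  ∑ x, μ x * ∑ c, p x c * (-Real.log (h x c))

/-- **Forward risk minimization recovers the clean posterior.**
A model minimizes the noisy forward risk over admissible models iff it minimizes the clean
risk; moreover it minimizes both iff it agrees with the clean posterior `p` on every
feature value of positive probability. In particular `p` itself minimizes both risks. -/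
theorem noisyForwardRisk_min_iff_cleanRisk_min {X C : Type*}
    [Fintype X] [Nonempty X] [Fintype C] [Nonempty C] [DecidableEq C]
    (μ : X → ℝ) (hμ0 : ∀ x, 0 ≤ μ x) (hμ1 : ∑ x, μ x = 1)
    (Q : Matrix C C ℝ)
    (hQ0 : ∀ i j, 0 ≤ Q i j) (hQ1 : ∀ i, ∑ j, Q i j = 1)
    (hQinv : IsUnit Q.det) (hQd : ∀ i, 0 < Q i i)
    (p : X → C → ℝ)
    (hp0 : ∀ x c, 0 < p x c) (hp1 : ∀ x, ∑ c, p x c = 1) :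
    (∀ h ∈ AdmissibleModel Q,
      ((∀ g ∈ AdmissibleModel Q, NoisyForwardRisk μ Q p h ≤ NoisyForwardRisk μ Q p g) ↔
        (∀ g ∈ AdmissibleModel Q, CleanRisk μ p h ≤ CleanRisk μ p g)) ∧
      (((∀ g ∈ AdmissibleModel Q, NoisyForwardRisk μ Q p h ≤ NoisyForwardRisk μ Q p g) ∧
        (∀ g ∈ AdmissibleModel Q, CleanRisk μ p h ≤ CleanRisk μ p g)) ↔
          ∀ x, 0 < μ x → h x = p x)) ∧
    (p ∈ AdmissibleModel Q ∧
      (∀ g ∈ AdmissibleModel Q, NoisyForwardRisk μ Q p p ≤ NoisyForwardRisk μ Q p g) ∧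
      (∀ g ∈ AdmissibleModel Q, CleanRisk μ p p ≤ CleanRisk μ p g)) := by
  classical
  -- forward-corrected prediction operator
  set T : (C → ℝ) → (C → ℝ) := fun v j => ∑ i, Q i j * v i with hT
  have hTsum : ∀ v : C → ℝ, ∑ c, v c = 1 → ∑ j, T v j = 1 := by
    intro v hv
    calc ∑ j, ∑ i, Q i j * v i = ∑ i, ∑ j, Q i j * v i := Finset.sum_comm
    _ = ∑ i, (∑ j, Q i j) * v i := by simp [Finset.sum_mul]
    _ = 1 := by simp [hQ1, hv]
  have hTppos : ∀ x j, 0 < T (p x) j := by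
    intro x j
    have h1 : Q j j * p x j ≤ ∑ i, Q i j * p x i :=
      Finset.single_le_sum (f := fun i => Q i j * p x i)
        (fun i _ => mul_nonneg (hQ0 i j) (hp0 x i).le) (Finset.mem_univ j)
    exact lt_of_lt_of_le (mul_pos (hQd j) (hp0 x j)) h1
  have hTmv : ∀ v : C → ℝ, T v = Q.transpose.mulVec v := fun v => funext fun j => by
    simp [T, Matrix.mulVec, dotProduct, Matrix.transpose_apply]
  have hTinj : ∀ v w : C → ℝ, T v = T w → v = w := by
    have hinj : Function.Injective (Q.transpose.mulVec) :=
      Matrix.mulVec_injective_iff_isUnit.mpr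
        ((Matrix.isUnit_iff_isUnit_det _).mpr (by rwa [Matrix.det_transpose]))
    intro v w hvw
    exact hinj (by rw [← hTmv, ← hTmv, hvw])
  -- p is admissible
  have hpAdm : p ∈ AdmissibleModel Q := fun x =>
    ⟨fun c => (hp0 x c).le, hp1 x, hp0 x, fun j => hTppos x j⟩
  -- unfolding of risks
  have hNunfold : ∀ h : X → C → ℝ,
      NoisyForwardRisk μ Q p h = ∑ x, μ x * ∑ j, T (p x) j * (-Real.log (T (h x) j)) := by
    intro h; rfl
  -- characterization for clean risk
  have charC : ∀ h ∈ AdmissibleModel Q,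
      ((∀ g ∈ AdmissibleModel Q, CleanRisk μ p h ≤ CleanRisk μ p g) ↔
        ∀ x, 0 < μ x → h x = p x) := by
    intro h hh
    constructor
    · intro hmin
      exact erisk_eq μ hμ0 p h hp0 (fun x => (hh x).2.2.1) hp1 (fun x => (hh x).2.1)
        (hmin p hpAdm)
    · intro heq g hg
      have hEq : CleanRisk μ p h = CleanRisk μ p p := by
        unfold CleanRisk
        refine Finset.sum_congr rfl fun x _ => ?_
        rcases lt_or_eq_of_le (hμ0 x) with hx | hx
        · rw [heq x hx]
        · rw [← hx]; ring
      rw [hEq]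
      exact erisk_le μ hμ0 p g hp0 (fun x => (hg x).2.2.1) hp1 (fun x => (hg x).2.1)
  -- characterization for noisy risk
  have charN : ∀ h ∈ AdmissibleModel Q,
      ((∀ g ∈ AdmissibleModel Q, NoisyForwardRisk μ Q p h ≤ NoisyForwardRisk μ Q p g) ↔
        ∀ x, 0 < μ x → h x = p x) := by
    intro h hh
    constructor
    · intro hmin
      have := erisk_eq μ hμ0 (fun x => T (p x)) (fun x => T (h x)) hTppos
        (fun x => (hh x).2.2.2) (fun x => hTsum _ (hp1 x)) (fun x => hTsum _ (hh x).2.1)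
        (by rw [← hNunfold, ← hNunfold]; exact hmin p hpAdm)
      exact fun x hx => hTinj _ _ (this x hx)
    · intro heq g hg
      have hEq : NoisyForwardRisk μ Q p h = NoisyForwardRisk μ Q p p := by
        rw [hNunfold, hNunfold]
        refine Finset.sum_congr rfl fun x _ => ?_
        rcases lt_or_eq_of_le (hμ0 x) with hx | hx
        · rw [heq x hx]
        · rw [← hx]; ring
      rw [hEq, hNunfold, hNunfold]
      exact erisk_le μ hμ0 (fun x => T (p x)) (fun x => T (g x)) hTppos
        (fun x => (hg x).2.2.2) (fun x => hTsum _ (hp1 x)) (fun x => hTsum _ (hg x).2.1)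
  refine ⟨fun h hh => ⟨(charN h hh).trans (charC h hh).symm, ?_⟩,
    hpAdm, (charN p hpAdm).mpr fun _ _ => rfl, (charC p hpAdm).mpr fun _ _ => rfl⟩
  constructor
  · intro ⟨hn, _⟩; exact (charN h hh).mp hn
  · intro he; exact ⟨(charN h hh).mpr he, (charC h hh).mpr he⟩
end

section
/- Fix finite nonempty types X (features) and C (classes) and a horizon T : ℕ. Let μ be a probability vector on feature sequences (Fin T → X). For each t : Fin T let p_t map each length-(t+1) prefix z : (Fin (t.val + 1) → X) to a probability vector on C with (p_t z) c > 0 for all c, and let Q_t : Matrix C C ℝ be row-stochastic, invertible, with positive diagonal. Define the noisy posterior p̃_t z j = ∑ i, Q_t i j * (p_t z) i, and define the joint noisy distribution ν on (Fin T → X) × (Fin T → C) by ν (x, ỹ) = μ x * ∏ t, p̃_t (prefix of x of length t+1) (ỹ t). A model is a family h_t mapping each length-(t+1) prefix to a probability vector on C, with all coordinates of h_t z and of Q_tᵀ (h_t z) strictly positive. Then a model h minimizes the expected forward sequence loss ∑_{(x, ỹ)} ν (x, ỹ) * ∑ t, (-Real.log (∑ i, Q_t i (ỹ t) * h_t (prefix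 of x of length t+1) i)) over all models if and only if it minimizes the expected clean sequence loss ∑_{(x, y)} ν' (x, y) * ∑ t, (-Real.log (h_t (prefix of x of length t+1) (y t))), where ν' (x, y) = μ x * ∏ t, p_t (prefix of x of length t+1) (y t); moreover both are minimized by h_t = p_t, and any minimizer h satisfies h_t z = p_t z for every t and every length-(t+1) prefix z carrying positive μ-probability (i.e., such that ∑_{x extending z} μ x > 0). -/
/-- The prefix of length `t+1` of a feature sequence `x : Fin T → X`. -/
def seqPrefix {X : Type*} {T : ℕ} (x : Fin T → X) (t : Fin T) : Fin (t.val + 1) → X :=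
  fun s => x ⟨s.val, lt_of_le_of_lt (Nat.lt_succ_iff.mp s.isLt) t.isLt⟩

/-- A sequential model: for each time step `t`, a map from length-`(t+1)` feature prefixes
to vectors over classes. -/
def SeqModel (X C : Type*) (T : ℕ) :=
  ∀ t : Fin T, (Fin (t.val + 1) → X) → C → ℝ

/-- Admissible sequential models: every prediction is a fully supported probability vector
whose forward-corrected prediction `Q_tᵀ (h t z)` is strictly positive. -/
def AdmissibleSeqModel {X C : Type*} [Fintype C] {T : ℕ}
    (Q : Fin T → Matrix C C ℝ) : Set (SeqModel X C T) :=
  {h | ∀ t z, (∀ c, 0 ≤ h t z c) ∧ (∑ c, h t z c = 1) ∧ (∀ c, 0 < h t z c) ∧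
    ∀ j, 0 < ∑ i, Q t i j * h t z i}

/-- The joint distribution on (feature sequence, label sequence) pairs obtained from a
feature marginal `μ` and per-step conditional label distributions `r t` given prefixes. -/
def JointSeqDist {X C : Type*} [Fintype C] {T : ℕ}
    (μ : (Fin T → X) → ℝ) (r : SeqModel X C T) : (Fin T → X) × (Fin T → C) → ℝ :=
  fun xy => μ xy.1 * ∏ t, r t (seqPrefix xy.1 t) (xy.2 t)

/-- The expected forward sequence loss of a model `h` under a joint distribution `ν` on
(feature sequence, noisy label sequence) pairs, with noise matrices `Q t`. -/
noncomputable def ExpForwardSeqLoss {X C : Type*} [Fintype X] [Fintype C] {T : ℕ}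
    (Q : Fin T → Matrix C C ℝ) (ν : (Fin T → X) × (Fin T → C) → ℝ)
    (h : SeqModel X C T) : ℝ :=
  ∑ xy : (Fin T → X) × (Fin T → C),
    ν xy * ∑ t, -Real.log (∑ i, Q t i (xy.2 t) * h t (seqPrefix xy.1 t) i)

/-- The expected clean sequence loss of a model `h` under a joint distribution `ν'` on
(feature sequence, clean label sequence) pairs. -/
noncomputable def ExpCleanSeqLoss {X C : Type*} [Fintype X] [Fintype C] {T : ℕ}
    (ν' : (Fin T → X) × (Fin T → C) → ℝ) (h : SeqModel X C T) : ℝ :=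
  ∑ xy : (Fin T → X) × (Fin T → C),
    ν' xy * ∑ t, -Real.log (h t (seqPrefix xy.1 t) (xy.2 t))


/-- Gibbs inequality with equality case. -/
lemma gibbs_aux_s5 {C : Type*} [Fintype C] (q r : C → ℝ)
    (hq : ∀ c, 0 < q c) (hr : ∀ c, 0 < r c)
    (hq1 : ∑ c, q c = 1) (hr1 : ∑ c, r c = 1) :
    (∑ c, q c * (-Real.log (q c)) ≤ ∑ c, q c * (-Real.log (r c))) ∧
    ((∑ c, q c * (-Real.log (r c)) ≤ ∑ c, q c * (-Real.log (q c))) → r = q) := by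
  have hterm : ∀ c, q c * Real.log (r c / q c) ≤ r c - q c := by
    intro c
    have h1 : Real.log (r c / q c) ≤ r c / q c - 1 :=
      Real.log_le_sub_one_of_pos (div_pos (hr c) (hq c))
    have h2 : q c * (r c / q c - 1) = r c - q c := by
      rw [mul_sub, mul_div_cancel₀ _ (ne_of_gt (hq c)), mul_one]
    nlinarith [hq c]
  have hsum : ∑ c, q c * Real.log (r c / q c) ≤ 0 := by
    calc ∑ c, q c * Real.log (r c / q c) ≤ ∑ c, (r c - q c) := Finset.sum_le_sum fun c _ => hterm c
    _ = 0 := by rw [Finset.sum_sub_distrib, hq1, hr1]; ring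
  have hdiff : ∑ c, q c * (-Real.log (r c)) - ∑ c, q c * (-Real.log (q c))
      = -(∑ c, q c * Real.log (r c / q c)) := by
    rw [← Finset.sum_sub_distrib, ← Finset.sum_neg_distrib]
    refine Finset.sum_congr rfl fun c _ => ?_
    rw [Real.log_div (ne_of_gt (hr c)) (ne_of_gt (hq c))]
    ring
  constructor
  · linarith
  · intro hle
    by_contra hne
    obtain ⟨c0, hc0⟩ : ∃ c, r c ≠ q c := by
      by_contra hx; push_neg at hx; exact hne (funext hx)
    have hstrict : q c0 * Real.log (r c0 / q c0) < r c0 - q c0 := by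
      have h1 : Real.log (r c0 / q c0) < r c0 / q c0 - 1 := by
        refine Real.log_lt_sub_one_of_pos (div_pos (hr c0) (hq c0)) ?_
        intro h
        rw [div_eq_one_iff_eq (ne_of_gt (hq c0))] at h
        exact hc0 h
      have h2 : q c0 * (r c0 / q c0 - 1) = r c0 - q c0 := by
        rw [mul_sub, mul_div_cancel₀ _ (ne_of_gt (hq c0)), mul_one]
      nlinarith [hq c0]
    have hsum' : ∑ c, q c * Real.log (r c / q c) < 0 := by
      calc ∑ c, q c * Real.log (r c / q c) < ∑ c, (r c - q c) :=
            Finset.sum_lt_sum (fun c _ => hterm c) ⟨c0, Finset.mem_univ c0, hstrict⟩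
      _ = 0 := by rw [Finset.sum_sub_distrib, hq1, hr1]; ring
    linarith

/-- Summing a per-step loss against a product of per-step label distributions. -/
lemma sum_labels_aux {C : Type*} [Fintype C] [DecidableEq C] {T : ℕ}
    (r L : Fin T → C → ℝ) (hr : ∀ t, ∑ c, r t c = 1) :
    ∑ y : Fin T → C, (∏ t, r t (y t)) * (∑ t, L t (y t)) = ∑ t, ∑ c, r t c * L t c := by
  have hsplit : ∀ y : Fin T → C, (∏ t, r t (y t)) * (∑ t, L t (y t))
      = ∑ t, ∏ s, (if s = t then r s (y s) * L s (y s) else r s (y s)) := by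
    intro y
    rw [Finset.mul_sum]
    refine Finset.sum_congr rfl fun t _ => ?_
    have : ∀ s : Fin T, (if s = t then r s (y s) * L s (y s) else r s (y s))
        = r s (y s) * (if s = t then L s (y s) else 1) := by
      intro s; split <;> simp
    rw [Finset.prod_congr rfl (fun s _ => this s), Finset.prod_mul_distrib,
      Finset.prod_ite_eq' Finset.univ t (fun s => L s (y s))]
    simp
  rw [Finset.sum_congr rfl fun y _ => hsplit y, Finset.sum_comm]
  refine Finset.sum_congr rfl fun t _ => ?_
  have := Finset.prod_univ_sum (fun _ : Fin T => (Finset.univ : Finset C))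
    (fun s c => if s = t then r s c * L s c else r s c)
  rw [Fintype.piFinset_univ] at this
  rw [← this]
  rw [Finset.prod_eq_single t]
  · simp
  · intro s _ hs; simp [hs, hr s]
  · simp

lemma vec_inj {C : Type*} [Fintype C] [DecidableEq C] (Q : Matrix C C ℝ) (hQ : IsUnit Q.det)
    (u v : C → ℝ) (h : ∀ j, ∑ i, Q i j * u i = ∑ i, Q i j * v i) : u = v := by
  have h1 : Matrix.vecMul u Q = Matrix.vecMul v Q := by
    funext j
    simpa [Matrix.vecMul, dotProduct, mul_comm] using h j
  have h2 := congrArg (fun w => Matrix.vecMul w Q⁻¹) h1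
  simpa [Matrix.vecMul_vecMul, Matrix.mul_nonsing_inv Q hQ, Matrix.vecMul_one] using h2

lemma nested_eq_of_le {T : ℕ} {κ : Fin T → Type*} [∀ t, Fintype (κ t)]
    (f g : ∀ t, κ t → ℝ) (hle : ∀ t k, f t k ≤ g t k)
    (hsum : ∑ t, ∑ k, g t k ≤ ∑ t, ∑ k, f t k) : ∀ t k, f t k = g t k := by
  have h1 : ∀ t, ∑ k, f t k ≤ ∑ k, g t k := fun t => Finset.sum_le_sum fun k _ => hle t k
  have h2 : (∑ t, ∑ k, f t k) = ∑ t, ∑ k, g t k :=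
    le_antisymm (Finset.sum_le_sum fun t _ => h1 t) hsum
  have h3 := (Finset.sum_eq_sum_iff_of_le (fun t _ => h1 t)).mp h2
  intro t k
  exact (Finset.sum_eq_sum_iff_of_le (fun k _ => hle t k)).mp (h3 t (Finset.mem_univ t)) k
    (Finset.mem_univ k)

lemma seq_decomp {X C : Type*} [Fintype X] [DecidableEq X] [Fintype C] [DecidableEq C] {T : ℕ}
    (μ : (Fin T → X) → ℝ) (r L : SeqModel X C T)
    (hr : ∀ t z, ∑ c, r t z c = 1) :
    (∑ xy : (Fin T → X) × (Fin T → C),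
        JointSeqDist μ r xy * ∑ t, L t (seqPrefix xy.1 t) (xy.2 t))
      = ∑ t : Fin T, ∑ z : Fin (t.val + 1) → X,
          (∑ x ∈ Finset.univ.filter (fun x => seqPrefix x t = z), μ x) *
            ∑ c, r t z c * L t z c := by
  rw [Fintype.sum_prod_type]
  have step1 : ∀ x : Fin T → X,
      (∑ y : Fin T → C, JointSeqDist μ r (x, y) * ∑ t, L t (seqPrefix x t) (y t))
        = ∑ t, μ x * ∑ c, r t (seqPrefix x t) c * L t (seqPrefix x t) c := by
    intro x
    simp only [JointSeqDist, mul_assoc]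
    rw [← Finset.mul_sum,
      sum_labels_aux (fun t => r t (seqPrefix x t)) (fun t => L t (seqPrefix x t))
        (fun t => hr t _), Finset.mul_sum]
  rw [Finset.sum_congr rfl fun x _ => step1 x, Finset.sum_comm]
  refine Finset.sum_congr rfl fun t _ => ?_
  rw [← Finset.sum_fiberwise Finset.univ (fun x => seqPrefix x t)
      (fun x => μ x * ∑ c, r t (seqPrefix x t) c * L t (seqPrefix x t) c)]
  refine Finset.sum_congr rfl fun z _ => ?_
  rw [Finset.sum_mul]
  refine Finset.sum_congr rfl fun x hx => ?_
  rw [(Finset.mem_filter.mp hx).2]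

/-- **Forward sequence loss on noisy labels recovers the clean-label MLE (the paper's
Proposition).** With clean per-step posteriors `p t`, noise matrices `Q t`, noisy posteriors
`p̃ t z j = ∑ i, Q t i j * p t z i`, joint noisy distribution `ν = JointSeqDist μ p̃` and
joint clean distribution `ν' = JointSeqDist μ p`: a model minimizes the expected forward
sequence loss under `ν` over admissible models iff it minimizes the expected clean sequence
loss under `ν'`; both are minimized by `p`; and any minimizer agrees with `p` on every
prefix of positive `μ`-probability. -/
theorem expForwardSeqLoss_min_iff_cleanSeqLoss_min {X C : Type*}
    [Fintype X] [Nonempty X] [DecidableEq X]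
    [Fintype C] [Nonempty C] [DecidableEq C] (T : ℕ)
    (μ : (Fin T → X) → ℝ) (hμ0 : ∀ x, 0 ≤ μ x) (hμ1 : ∑ x, μ x = 1)
    (p : SeqModel X C T)
    (hp0 : ∀ t z c, 0 < p t z c) (hp1 : ∀ t z, ∑ c, p t z c = 1)
    (Q : Fin T → Matrix C C ℝ)
    (hQ0 : ∀ t i j, 0 ≤ Q t i j) (hQ1 : ∀ t i, ∑ j, Q t i j = 1)
    (hQinv : ∀ t, IsUnit (Q t).det) (hQd : ∀ t i, 0 < Q t i i) :
    (∀ h ∈ AdmissibleSeqModel Q,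
      (∀ g ∈ AdmissibleSeqModel Q,
          ExpForwardSeqLoss Q (JointSeqDist μ fun t z j => ∑ i, Q t i j * p t z i) h ≤
            ExpForwardSeqLoss Q (JointSeqDist μ fun t z j => ∑ i, Q t i j * p t z i) g) ↔
        (∀ g ∈ AdmissibleSeqModel Q,
          ExpCleanSeqLoss (JointSeqDist μ p) h ≤ ExpCleanSeqLoss (JointSeqDist μ p) g)) ∧
    (p ∈ AdmissibleSeqModel Q ∧
      (∀ g ∈ AdmissibleSeqModel Q,
        ExpForwardSeqLoss Q (JointSeqDist μ fun t z j => ∑ i, Q t i j * p t z i) p ≤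
          ExpForwardSeqLoss Q (JointSeqDist μ fun t z j => ∑ i, Q t i j * p t z i) g) ∧
      (∀ g ∈ AdmissibleSeqModel Q,
        ExpCleanSeqLoss (JointSeqDist μ p) p ≤ ExpCleanSeqLoss (JointSeqDist μ p) g)) ∧
    (∀ h ∈ AdmissibleSeqModel Q,
      (∀ g ∈ AdmissibleSeqModel Q,
          ExpForwardSeqLoss Q (JointSeqDist μ fun t z j => ∑ i, Q t i j * p t z i) h ≤
            ExpForwardSeqLoss Q (JointSeqDist μ fun t z j => ∑ i, Q t i j * p t z i) g) →
        ∀ (t : Fin T) (z : Fin (t.val + 1) → X),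
          0 < ∑ x ∈ Finset.univ.filter (fun x : Fin T → X => seqPrefix x t = z), μ x →
            h t z = p t z) := by
  classical
  -- weights
  set w : ∀ t : Fin T, (Fin (t.val + 1) → X) → ℝ :=
    fun t z => ∑ x ∈ Finset.univ.filter (fun x : Fin T → X => seqPrefix x t = z), μ x with hw
  have hw0 : ∀ t z, 0 ≤ w t z := fun t z => Finset.sum_nonneg fun x _ => hμ0 x
  -- noisy posterior
  set pt : SeqModel X C T := fun t z j => ∑ i, Q t i j * p t z i with hptdef
  have hQT1 : ∀ (t : Fin T) (u : C → ℝ), (∑ c, u c = 1) → ∑ j, ∑ i, Q t i j * u i = 1 := by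
    intro t u hu
    rw [Finset.sum_comm]
    have : ∀ i, ∑ j, Q t i j * u i = u i := by
      intro i; rw [← Finset.sum_mul, hQ1 t i, one_mul]
    rw [Finset.sum_congr rfl fun i _ => this i, hu]
  have hpt1 : ∀ t z, ∑ c, pt t z c = 1 := fun t z => hQT1 t (p t z) (hp1 t z)
  have hpt0 : ∀ t z j, 0 < pt t z j := by
    intro t z j
    refine Finset.sum_pos' (fun i _ => mul_nonneg (hQ0 t i j) (hp0 t z i).le)
      ⟨j, Finset.mem_univ j, mul_pos (hQd t j) (hp0 t z j)⟩
  have hpadm : p ∈ AdmissibleSeqModel Q :=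
    fun t z => ⟨fun c => (hp0 t z c).le, hp1 t z, hp0 t z, fun j => hpt0 t z j⟩
  -- loss decompositions
  have hFdec : ∀ g : SeqModel X C T,
      ExpForwardSeqLoss Q (JointSeqDist μ fun t z j => ∑ i, Q t i j * p t z i) g
        = ∑ t, ∑ z, w t z * ∑ c, pt t z c * (-Real.log (∑ i, Q t i c * g t z i)) := by
    intro g
    exact seq_decomp μ pt (fun t z c => -Real.log (∑ i, Q t i c * g t z i)) hpt1
  have hCdec : ∀ g : SeqModel X C T,
      ExpCleanSeqLoss (JointSeqDist μ p) g
        = ∑ t, ∑ z, w t z * ∑ c, p t z c * (-Real.log (g t z c)) := by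
    intro g
    exact seq_decomp μ p (fun t z c => -Real.log (g t z c)) hp1
  -- per-point Gibbs facts for admissible models
  have gibbsF : ∀ g ∈ AdmissibleSeqModel Q, ∀ t z,
      (∑ c, pt t z c * (-Real.log (pt t z c))
          ≤ ∑ c, pt t z c * (-Real.log (∑ i, Q t i c * g t z i))) ∧
      ((∑ c, pt t z c * (-Real.log (∑ i, Q t i c * g t z i))
          ≤ ∑ c, pt t z c * (-Real.log (pt t z c))) → g t z = p t z) := by
    intro g hg t z
    obtain ⟨_, hg1, _, hg4⟩ := hg t z
    have H := gibbs_aux_s5 (pt t z) (fun c => ∑ i, Q t i c * g t z i)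
      (hpt0 t z) hg4 (hpt1 t z) (hQT1 t (g t z) hg1)
    refine ⟨H.1, fun hle => ?_⟩
    have := H.2 hle
    exact vec_inj (Q t) (hQinv t) (g t z) (p t z) (fun j => congrFun this j)
  have gibbsC : ∀ g ∈ AdmissibleSeqModel Q, ∀ t z,
      (∑ c, p t z c * (-Real.log (p t z c))
          ≤ ∑ c, p t z c * (-Real.log (g t z c))) ∧
      ((∑ c, p t z c * (-Real.log (g t z c))
          ≤ ∑ c, p t z c * (-Real.log (p t z c))) → g t z = p t z) := by
    intro g hg t z
    obtain ⟨_, hg1, hg3, _⟩ := hg t z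
    exact gibbs_aux_s5 (p t z) (g t z) (hp0 t z) hg3 (hp1 t z) hg1
  -- forward loss: p is a minimizer
  have keyF_le : ∀ g ∈ AdmissibleSeqModel Q,
      ExpForwardSeqLoss Q (JointSeqDist μ fun t z j => ∑ i, Q t i j * p t z i) p
        ≤ ExpForwardSeqLoss Q (JointSeqDist μ fun t z j => ∑ i, Q t i j * p t z i) g := by
    intro g hg
    rw [hFdec, hFdec]
    refine Finset.sum_le_sum fun t _ => Finset.sum_le_sum fun z _ =>
      mul_le_mul_of_nonneg_left ?_ (hw0 t z)
    exact (gibbsF g hg t z).1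
  have keyC_le : ∀ g ∈ AdmissibleSeqModel Q,
      ExpCleanSeqLoss (JointSeqDist μ p) p ≤ ExpCleanSeqLoss (JointSeqDist μ p) g := by
    intro g hg
    rw [hCdec, hCdec]
    refine Finset.sum_le_sum fun t _ => Finset.sum_le_sum fun z _ =>
      mul_le_mul_of_nonneg_left ?_ (hw0 t z)
    exact (gibbsC g hg t z).1
  -- forward loss: equality case
  have keyF_eq : ∀ g ∈ AdmissibleSeqModel Q,
      ExpForwardSeqLoss Q (JointSeqDist μ fun t z j => ∑ i, Q t i j * p t z i) g
        ≤ ExpForwardSeqLoss Q (JointSeqDist μ fun t z j => ∑ i, Q t i j * p t z i) p →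
      ∀ t z, 0 < w t z → g t z = p t z := by
    intro g hg hle t z hwz
    rw [hFdec, hFdec] at hle
    have heq := nested_eq_of_le
      (fun t z => w t z * ∑ c, pt t z c * (-Real.log (pt t z c)))
      (fun t z => w t z * ∑ c, pt t z c * (-Real.log (∑ i, Q t i c * g t z i)))
      (fun t z => mul_le_mul_of_nonneg_left (gibbsF g hg t z).1 (hw0 t z)) hle t z
    have hce := mul_left_cancel₀ (ne_of_gt hwz) heq
    exact (gibbsF g hg t z).2 hce.symm.le
  have keyC_eq : ∀ g ∈ AdmissibleSeqModel Q,
      ExpCleanSeqLoss (JointSeqDist μ p) g ≤ ExpCleanSeqLoss (JointSeqDist μ p) p →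
      ∀ t z, 0 < w t z → g t z = p t z := by
    intro g hg hle t z hwz
    rw [hCdec, hCdec] at hle
    have heq := nested_eq_of_le
      (fun t z => w t z * ∑ c, p t z c * (-Real.log (p t z c)))
      (fun t z => w t z * ∑ c, p t z c * (-Real.log (g t z c)))
      (fun t z => mul_le_mul_of_nonneg_left (gibbsC g hg t z).1 (hw0 t z)) hle t z
    have hce := mul_left_cancel₀ (ne_of_gt hwz) heq
    exact (gibbsC g hg t z).2 hce.symm.le
  -- if g agrees with p on positive-weight prefixes then the losses coincide
  have keyF_of : ∀ g : SeqModel X C T, (∀ t z, 0 < w t z → g t z = p t z) →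
      ExpForwardSeqLoss Q (JointSeqDist μ fun t z j => ∑ i, Q t i j * p t z i) g
        = ExpForwardSeqLoss Q (JointSeqDist μ fun t z j => ∑ i, Q t i j * p t z i) p := by
    intro g hgp
    rw [hFdec, hFdec]
    refine Finset.sum_congr rfl fun t _ => Finset.sum_congr rfl fun z _ => ?_
    rcases (hw0 t z).lt_or_eq with hlt | h0
    · rw [hgp t z hlt]
    · rw [← h0, zero_mul, zero_mul]
  have keyC_of : ∀ g : SeqModel X C T, (∀ t z, 0 < w t z → g t z = p t z) →
      ExpCleanSeqLoss (JointSeqDist μ p) g = ExpCleanSeqLoss (JointSeqDist μ p) p := by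
    intro g hgp
    rw [hCdec, hCdec]
    refine Finset.sum_congr rfl fun t _ => Finset.sum_congr rfl fun z _ => ?_
    rcases (hw0 t z).lt_or_eq with hlt | h0
    · rw [hgp t z hlt]
    · rw [← h0, zero_mul, zero_mul]
  -- characterizations of minimizers
  have charF : ∀ h ∈ AdmissibleSeqModel Q,
      ((∀ g ∈ AdmissibleSeqModel Q,
        ExpForwardSeqLoss Q (JointSeqDist μ fun t z j => ∑ i, Q t i j * p t z i) h ≤
          ExpForwardSeqLoss Q (JointSeqDist μ fun t z j => ∑ i, Q t i j * p t z i) g)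
        ↔ (∀ t z, 0 < w t z → h t z = p t z)) := by
    intro h hh
    constructor
    · intro hmin
      exact keyF_eq h hh (hmin p hpadm)
    · intro hhp g hg
      rw [keyF_of h hhp]
      exact keyF_le g hg
  have charC : ∀ h ∈ AdmissibleSeqModel Q,
      ((∀ g ∈ AdmissibleSeqModel Q,
        ExpCleanSeqLoss (JointSeqDist μ p) h ≤ ExpCleanSeqLoss (JointSeqDist μ p) g)
        ↔ (∀ t z, 0 < w t z → h t z = p t z)) := by
    intro h hh
    constructor
    · intro hmin
      exact keyC_eq h hh (hmin p hpadm)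
    · intro hhp g hg
      rw [keyC_of h hhp]
      exact keyC_le g hg
  refine ⟨fun h hh => (charF h hh).trans (charC h hh).symm,
    ⟨hpadm, keyF_le, keyC_le⟩,
    fun h hh hmin t z hwz => (charF h hh).mp hmin t z hwz⟩
end
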